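/- arXiv:2107.11925 — 2 statements merged into one kernel-verified Lean document; each statement's English description precedes it below -/
import Mathlib

section
/- Let λ ∈ ℝ \ {0} and let f : Ω → ℝ be a regular c_λ-convex function on a nonempty open convex set Ω ⊂ ℝ^d, with Ω' = ∇^{c_λ} f(Ω) and f^{c_λ} its c_λ-conjugate regarded as a function on Ω'. Then f^{c_λ} is differentiable on Ω', for every v ∈ Ω' one has 1 − λ ∇f^{c_λ}(v)·v > 0, and the map v ↦ ∇f^{c_λ}(v)/(1 − λ ∇f^{c_λ}(v)·v) is the inverse of ∇^{c_λ} f; that is, for all u ∈ Ω, ∇^{c_λ} f^{c_λ}(∇^{c_λ} f(u)) = u. -/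
open MeasureTheory Real
open scoped RealInnerProductSpace ENNReal BigOperators

noncomputable section

/-- The negative logarithmic cost `-c_λ(u,v) = (1/λ)·log(1 + λ u·v)`, valued in `EReal`,
with the convention `log t = -∞` for `t ≤ 0` (so that `(1/λ)·(-∞) = -∞` for `λ > 0` and
`= +∞` for `λ < 0`). -/
def negCost {d : ℕ} (lam : ℝ) (u v : EuclideanSpace ℝ (Fin d)) : EReal :=
  if 0 < 1 + lam * ⟪u, v⟫ then (((1 / lam) * Real.log (1 + lam * ⟪u, v⟫) : ℝ) : EReal)
  else if 0 < lam then ⊥ else ⊤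

/-- The `c_λ`-conjugate `f^{c_λ}(v) = sup_{u ∈ Ω} { (1/λ)·log(1 + λ u·v) − f(u) }`. -/
def lamConj {d : ℕ} (lam : ℝ) (Ω : Set (EuclideanSpace ℝ (Fin d)))
    (f : EuclideanSpace ℝ (Fin d) → ℝ) (v : EuclideanSpace ℝ (Fin d)) : EReal :=
  ⨆ u ∈ Ω, (negCost lam u v - ((f u : ℝ) : EReal))

/-- The `λ`-gradient (deformed Legendre transform) `∇^{c_λ} f(u) = ∇f(u)/(1 − λ ∇f(u)·u)`. -/
def lamGrad {d : ℕ} (lam : ℝ) (f : EuclideanSpace ℝ (Fin d) → ℝ)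
    (u : EuclideanSpace ℝ (Fin d)) : EuclideanSpace ℝ (Fin d) :=
  (1 - lam * ⟪gradient f u, u⟫)⁻¹ • gradient f u

/-- A regular `c_λ`-convex function: `f` smooth on a nonempty open convex `Ω`, the Hessian of
`F_λ = (1/λ)(e^{λ f} − 1)` strictly positive definite on `Ω`, and `1 − λ ∇f(u)·u > 0` on `Ω`. -/
def IsRegularCConvex {d : ℕ} (lam : ℝ) (Ω : Set (EuclideanSpace ℝ (Fin d)))
    (f : EuclideanSpace ℝ (Fin d) → ℝ) : Prop :=
  Ω.Nonempty ∧ IsOpen Ω ∧ Convex ℝ Ω ∧ ContDiffOn ℝ (⊤ : ℕ∞) f Ω ∧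
    (∀ u ∈ Ω, ∀ w : EuclideanSpace ℝ (Fin d), w ≠ 0 →
      0 < ⟪fderiv ℝ (gradient fun z => (1 / lam) * (Real.exp (lam * f z) - 1)) u w, w⟫) ∧
    ∀ u ∈ Ω, 0 < 1 - lam * ⟪gradient f u, u⟫

/-! Put `F = (1/λ)(e^{λ f} - 1)`. Strict convexity of `F` on `Ω` gives, for `u ≠ u'`,
`⟪∇f u', u - u'⟫ < (e^{λ (f u - f u')} - 1) / λ`, which says exactly that the supremum defining
`f^{c_λ}(∇^{c_λ} f u')` is attained only at `u = u'`. Writing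
`∇^{c_λ} f = ∇F / (1 + λ F - λ ⟪∇F, u⟫)`, its derivative is `a H + c ⟪u, H ·⟫ ∇F` with `H` the
Hessian of `F`; this is injective since `H` is positive definite and `1 + λ F = e^{λ f} ≠ 0`, so
`∇^{c_λ} f` has a differentiable local inverse `T`. Near
`v = ∇^{c_λ} f u` we then have `f^{c_λ}(v) = (1/λ) log(1 + λ ⟪T v, v⟫) - f (T v)`, and by the
envelope theorem its gradient is `u / (1 + λ ⟪u, v⟫) = (1 - λ ⟪∇f u, u⟫) • u`, whose
λ-gradient is `u`. -/

open InnerProductSpace Set Filter Topology Function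

-- `F_λ = lamExp lam ∘ f`, and `lamLog lam ⟪u, v⟫` is `negCost lam u v` where the latter is finite
def lamExp (lam t : ℝ) : ℝ := 1 / lam * (Real.exp (lam * t) - 1)

def lamLog (lam t : ℝ) : ℝ := 1 / lam * Real.log (1 + lam * t)

section DeformedExpLog

variable {lam : ℝ}

lemma one_add_mul_lamExp (hlam : lam ≠ 0) (t : ℝ) :
    1 + lam * lamExp lam t = Real.exp (lam * t) := by
  unfold lamExp
  field_simp
  ring

lemma lamExp_sub_lamExp (hlam : lam ≠ 0) (a b : ℝ) :
    lamExp lam a - lamExp lam b = Real.exp (lam * b) * lamExp lam (a - b) := by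
  unfold lamExp
  rw [mul_sub lam a b, Real.exp_sub]
  field_simp
  ring

lemma lamExp_lamLog (hlam : lam ≠ 0) {x : ℝ} (hx : 0 < 1 + lam * x) :
    lamExp lam (lamLog lam x) = x := by
  unfold lamExp lamLog
  rw [← mul_assoc, mul_one_div_cancel hlam, one_mul, Real.exp_log hx]
  field_simp
  ring

lemma lamLog_zero : lamLog lam 0 = 0 := by
  simp [lamLog]

lemma hasDerivAt_lamExp (hlam : lam ≠ 0) (t : ℝ) :
    HasDerivAt (lamExp lam) (Real.exp (lam * t)) t := by
  have h := (((hasDerivAt_id t).const_mul lam).exp.sub_const 1).const_mul (1 / lam)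
  simp only [id, mul_one] at h
  exact h.congr_deriv (by field_simp)

lemma contDiff_lamExp {n : WithTop ℕ∞} : ContDiff ℝ n (lamExp lam) := by
  unfold lamExp
  fun_prop

lemma strictMono_lamExp (hlam : lam ≠ 0) : StrictMono (lamExp lam) :=
  strictMono_of_hasDerivAt_pos (hasDerivAt_lamExp hlam) fun _ => Real.exp_pos _

lemma lamLog_lt_iff_lt_lamExp (hlam : lam ≠ 0) {x y : ℝ} (hx : 0 < 1 + lam * x) :
    lamLog lam x < y ↔ x < lamExp lam y := by
  rw [← (strictMono_lamExp hlam).lt_iff_lt, lamExp_lamLog hlam hx]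

lemma one_add_mul_pos_of_le_lamExp (hlam : lam < 0) {x y : ℝ} (h : x ≤ lamExp lam y) :
    0 < 1 + lam * x := by
  have hexp := one_add_mul_lamExp hlam.ne y
  have := mul_le_mul_of_nonpos_left h hlam.le
  linarith [Real.exp_pos (lam * y)]

lemma hasDerivAt_lamLog (hlam : lam ≠ 0) {t : ℝ} (ht : 1 + lam * t ≠ 0) :
    HasDerivAt (lamLog lam) (1 + lam * t)⁻¹ t := by
  have h := ((((hasDerivAt_id t).const_mul lam).const_add 1).log ht).const_mul (1 / lam)
  simp only [id, mul_one] at h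
  exact h.congr_deriv (by field_simp)

end DeformedExpLog

section Gradient

variable {E : Type*} [NormedAddCommGroup E] [InnerProductSpace ℝ E]

lemma injective_smul_add_smul_smulRight {H : E →L[ℝ] E}
    (hH : ∀ w, w ≠ 0 → 0 < ⟪H w, w⟫) {a c : ℝ} {u b : E} (ha : a ≠ 0)
    (hac : a + c * ⟪u, b⟫ ≠ 0) :
    Injective (a • H + c • ((innerSL ℝ u).comp H).smulRight b) := by
  refine (injective_iff_map_eq_zero _).2 fun w hw => ?_
  simp only [add_apply, smul_apply, ContinuousLinearMap.smulRight_apply,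
    ContinuousLinearMap.comp_apply, coe_innerSL_apply] at hw
  have hinner : ⟪u, H w⟫ * (a + c * ⟪u, b⟫) = 0 := by
    have := congrArg (inner ℝ u) hw
    simp only [inner_add_right, real_inner_smul_right, inner_zero_right] at this
    linear_combination this
  have hHw : H w = 0 := by
    have hu0 : ⟪u, H w⟫ = 0 := (mul_eq_zero.mp hinner).resolve_right hac
    rw [hu0, zero_smul, smul_zero, add_zero] at hw
    exact (smul_eq_zero.mp hw).resolve_left ha
  by_contra hw0
  simpa [hHw] using hH w hw0

variable [CompleteSpace E]

lemma ContDiffOn.gradient {F : E → ℝ} {s : Set E} {m n : WithTop ℕ∞} (hF : ContDiffOn ℝ n F s)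
    (hs : IsOpen s) (hmn : m + 1 ≤ n) : ContDiffOn ℝ m (gradient F) s :=
  (hF.fderiv_of_isOpen hs hmn).continuousLinearMap_comp
    (toDual ℝ E).symm.toContinuousLinearEquiv.toContinuousLinearMap

lemma HasGradientAt.lamExp_comp {lam : ℝ} (hlam : lam ≠ 0) {f : E → ℝ} {a u : E}
    (hf : HasGradientAt f a u) :
    HasGradientAt (fun z => lamExp lam (f z)) (Real.exp (lam * f u) • a) u := by
  rw [hasGradientAt_iff_hasFDerivAt] at hf ⊢
  refine ((hasDerivAt_lamExp hlam (f u)).comp_hasFDerivAt u hf).congr_fderiv ?_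
  ext w
  simp

theorem add_inner_gradient_lt_of_hessian_pos {F : E → ℝ} {Ω : Set E} (hΩ : IsOpen Ω)
    (hconv : Convex ℝ Ω) (hF : DifferentiableOn ℝ F Ω) (hF' : DifferentiableOn ℝ (gradient F) Ω)
    (hH : ∀ u ∈ Ω, ∀ w, w ≠ 0 → 0 < ⟪fderiv ℝ (gradient F) u w, w⟫)
    {u u' : E} (hu : u ∈ Ω) (hu' : u' ∈ Ω) (hne : u ≠ u') :
    F u' + ⟪gradient F u', u - u'⟫ < F u := by
  set w := u - u'
  have hw : w ≠ 0 := sub_ne_zero.mpr hne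
  set γ : ℝ → E := fun t => u' + t • w
  have hγΩ : ∀ t ∈ Icc (0 : ℝ) 1, γ t ∈ Ω := fun t ht => hconv.add_smul_sub_mem hu' hu ht
  have hγ : ∀ t, HasDerivAt γ w t := fun t => by
    simpa only [id, one_smul] using ((hasDerivAt_id t).smul_const w).const_add u'
  have hFγ : ∀ t ∈ Icc (0 : ℝ) 1, HasDerivAt (F ∘ γ) ⟪gradient F (γ t), w⟫ t := fun t ht => by
    simpa using
      ((hF.differentiableAt (hΩ.mem_nhds (hγΩ t ht))).hasGradientAt.hasFDerivAt.comp_hasDerivAt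
        t (hγ t))
  have hφ : ∀ t ∈ Icc (0 : ℝ) 1, HasDerivAt (fun t => ⟪gradient F (γ t), w⟫)
      ⟪fderiv ℝ (gradient F) (γ t) w, w⟫ t := fun t ht => by
    simpa using
      (((hF'.differentiableAt (hΩ.mem_nhds (hγΩ t ht))).hasFDerivAt.comp_hasDerivAt t
        (hγ t)).inner ℝ (hasDerivAt_const t w))
  have hmono : StrictMonoOn (fun t => ⟪gradient F (γ t), w⟫) (Icc 0 1) := by
    refine strictMonoOn_of_deriv_pos (convex_Icc 0 1)
      (fun t ht => (hφ t ht).continuousAt.continuousWithinAt) fun t ht => ?_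
    rw [interior_Icc] at ht
    rw [(hφ t (Ioo_subset_Icc_self ht)).deriv]
    exact hH _ (hγΩ t (Ioo_subset_Icc_self ht)) w hw
  obtain ⟨c, hc, hslope⟩ := exists_hasDerivAt_eq_slope (F ∘ γ) _ one_pos
    (fun t ht => (hFγ t ht).continuousAt.continuousWithinAt)
    fun t ht => hFγ t (Ioo_subset_Icc_self ht)
  have hlt := hmono (left_mem_Icc.2 zero_le_one) (Ioo_subset_Icc_self hc) hc.1
  simp only [γ, comp_apply, zero_smul, add_zero, one_smul, sub_zero, div_one] at hslope hlt
  rw [hslope, add_sub_cancel] at hlt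
  linarith

def lamDenom (lam : ℝ) (F : E → ℝ) (u : E) : ℝ := 1 + lam * F u - lam * ⟪gradient F u, u⟫

lemma hasFDerivAt_lamDenom (lam : ℝ) {F : E → ℝ} {u₀ : E} {H : E →L[ℝ] E}
    (hF : DifferentiableAt ℝ F u₀) (hH : HasFDerivAt (gradient F) H u₀) :
    HasFDerivAt (lamDenom lam F) (-lam • (innerSL ℝ u₀).comp H) u₀ := by
  have h := ((hF.hasGradientAt.hasFDerivAt.const_mul lam).const_add 1).sub
    ((hH.inner ℝ (hasFDerivAt_id u₀)).const_mul lam)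
  refine h.congr_fderiv ?_
  ext w
  simp only [sub_apply, smul_apply, smul_eq_mul, ContinuousLinearMap.comp_apply,
    ContinuousLinearMap.prod_apply, ContinuousLinearMap.id_apply, fderivInnerCLM_apply,
    toDual_gradient, inner_gradient_left, real_inner_comm u₀, neg_smul, neg_apply,
    coe_innerSL_apply, id_eq]
  ring

lemma hasFDerivAt_inv_lamDenom_smul_gradient (lam : ℝ) {F : E → ℝ} {u₀ : E} {H : E →L[ℝ] E}
    (hF : DifferentiableAt ℝ F u₀) (hH : HasFDerivAt (gradient F) H u₀)
    (hσ : lamDenom lam F u₀ ≠ 0) :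
    HasFDerivAt (fun u => (lamDenom lam F u)⁻¹ • gradient F u)
      ((lamDenom lam F u₀)⁻¹ • H +
        (lam / lamDenom lam F u₀ ^ 2) • ((innerSL ℝ u₀).comp H).smulRight (gradient F u₀)) u₀ := by
  have h := ((hasDerivAt_inv hσ).comp_hasFDerivAt u₀ (hasFDerivAt_lamDenom lam hF hH)).smul hH
  refine h.congr_fderiv ?_
  ext w
  simp [smul_smul, div_eq_inv_mul]

lemma lamDenom_lamExp_comp {lam : ℝ} (hlam : lam ≠ 0) {f : E → ℝ} {u : E}
    (hf : DifferentiableAt ℝ f u) :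
    lamDenom lam (fun z => lamExp lam (f z)) u =
      Real.exp (lam * f u) * (1 - lam * ⟪gradient f u, u⟫) := by
  rw [lamDenom, (hf.hasGradientAt.lamExp_comp hlam).gradient, real_inner_smul_left,
    ← one_add_mul_lamExp hlam]
  ring

end Gradient

def conjTerm {d : ℕ} (lam : ℝ) (f : EuclideanSpace ℝ (Fin d) → ℝ)
    (u v : EuclideanSpace ℝ (Fin d)) : ℝ :=
  lamLog lam ⟪u, v⟫ - f u

section LamGrad

variable {d : ℕ} {lam : ℝ} {Ω : Set (EuclideanSpace ℝ (Fin d))}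
  {f : EuclideanSpace ℝ (Fin d) → ℝ} {u u' u₀ v : EuclideanSpace ℝ (Fin d)}

lemma negCost_sub_eq_conjTerm (h : 0 < 1 + lam * ⟪u, v⟫) :
    negCost lam u v - ((f u : ℝ) : EReal) = conjTerm lam f u v := by
  rw [negCost, if_pos h, ← EReal.coe_sub]
  rfl

lemma one_add_mul_inner_lamGrad (hs : 1 - lam * ⟪gradient f u', u'⟫ ≠ 0) :
    1 + lam * ⟪u, lamGrad lam f u'⟫ =
      (1 + lam * ⟪gradient f u', u - u'⟫) / (1 - lam * ⟪gradient f u', u'⟫) := by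
  rw [lamGrad, real_inner_smul_right, inner_sub_right, real_inner_comm u]
  field_simp
  ring

lemma one_add_mul_inner_lamGrad_self (hs : 1 - lam * ⟪gradient f u, u⟫ ≠ 0) :
    1 + lam * ⟪u, lamGrad lam f u⟫ = (1 - lam * ⟪gradient f u, u⟫)⁻¹ := by
  rw [one_add_mul_inner_lamGrad hs, sub_self, inner_zero_right, mul_zero, add_zero, one_div]

lemma lamLog_inner_lamGrad (hs : 0 < 1 - lam * ⟪gradient f u', u'⟫)
    (hP : 0 < 1 + lam * ⟪gradient f u', u - u'⟫) :
    lamLog lam ⟪u, lamGrad lam f u'⟫ =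
      lamLog lam ⟪gradient f u', u - u'⟫ - 1 / lam * Real.log (1 - lam * ⟪gradient f u', u'⟫) := by
  rw [lamLog, lamLog, one_add_mul_inner_lamGrad hs.ne', Real.log_div hP.ne' hs.ne']
  ring

lemma conjTerm_lamGrad_lt (hlam : lam ≠ 0) (hs : 0 < 1 - lam * ⟪gradient f u', u'⟫)
    (hsub : ⟪gradient f u', u - u'⟫ < lamExp lam (f u - f u'))
    (hpos : 0 < 1 + lam * ⟪u, lamGrad lam f u'⟫) :
    conjTerm lam f u (lamGrad lam f u') < conjTerm lam f u' (lamGrad lam f u') := by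
  rw [one_add_mul_inner_lamGrad hs.ne'] at hpos
  have hP := (div_pos_iff_of_pos_right hs).mp hpos
  have hlog := (lamLog_lt_iff_lt_lamExp hlam hP).2 hsub
  rw [conjTerm, conjTerm, lamLog_inner_lamGrad hs hP,
    lamLog_inner_lamGrad hs (by simp), sub_self, inner_zero_right, lamLog_zero]
  linarith

lemma one_sub_mul_inner_smul_lamGrad (hs : 1 - lam * ⟪gradient f u, u⟫ ≠ 0) :
    1 - lam * ⟪(1 - lam * ⟪gradient f u, u⟫) • u, lamGrad lam f u⟫ =
      1 - lam * ⟪gradient f u, u⟫ := by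
  have h := one_add_mul_inner_lamGrad_self hs
  rw [real_inner_smul_left]
  field_simp at h
  linear_combination -h

/-- Envelope theorem: the `u`-derivative vanishes at `(u₀, lamGrad lam f u₀)`, since the supremum
defining `lamConj lam Ω f (lamGrad lam f u₀)` is attained at `u₀`. -/
theorem hasFDerivAt_conjTerm_lamGrad (hlam : lam ≠ 0) (hf : DifferentiableAt ℝ f u₀)
    (hs : 0 < 1 - lam * ⟪gradient f u₀, u₀⟫) :
    HasFDerivAt (fun p : EuclideanSpace ℝ (Fin d) × EuclideanSpace ℝ (Fin d) =>
        conjTerm lam f p.1 p.2)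
      ((innerSL ℝ ((1 - lam * ⟪gradient f u₀, u₀⟫) • u₀)).comp (ContinuousLinearMap.snd ℝ _ _))
      (u₀, lamGrad lam f u₀) := by
  have hself := one_add_mul_inner_lamGrad_self hs.ne'
  have hlog := (hasDerivAt_lamLog hlam (by rw [hself]; positivity)).comp_hasFDerivAt
    (u₀, lamGrad lam f u₀) (hasFDerivAt_fst.inner ℝ hasFDerivAt_snd)
  refine (hlog.sub (hf.hasFDerivAt.comp _ hasFDerivAt_fst)).congr_fderiv ?_
  have hinv : (1 + lam * ⟪u₀, lamGrad lam f u₀⟫)⁻¹ = 1 - lam * ⟪gradient f u₀, u₀⟫ := by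
    rw [hself, inv_inv]
  ext w
  · simp only [hinv, ContinuousLinearMap.fst_prod_snd, ContinuousLinearMap.comp_id,
      ContinuousLinearMap.sub_comp, ContinuousLinearMap.smul_comp, sub_apply, smul_apply,
      ContinuousLinearMap.comp_apply, ContinuousLinearMap.inl_apply, fderivInnerCLM_apply,
      ContinuousLinearMap.coe_fst', ContinuousLinearMap.coe_snd', inner_zero_right, zero_add,
      smul_eq_mul, map_zero]
    rw [lamGrad, real_inner_smul_right, ← mul_assoc, mul_inv_cancel₀ hs.ne', one_mul,
      real_inner_comm, inner_gradient_left, sub_self]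
  · simp [hinv]

namespace IsRegularCConvex

lemma differentiableAt (hreg : IsRegularCConvex lam Ω f) (hu : u ∈ Ω) :
    DifferentiableAt ℝ f u :=
  (hreg.2.2.2.1.differentiableOn (by simp)).differentiableAt (hreg.2.1.mem_nhds hu)

theorem inner_gradient_lt_lamExp (hlam : lam ≠ 0) (hreg : IsRegularCConvex lam Ω f)
    (hu : u ∈ Ω) (hu' : u' ∈ Ω) (hne : u ≠ u') :
    ⟪gradient f u', u - u'⟫ < lamExp lam (f u - f u') := by
  have hfu' := hreg.differentiableAt hu'
  obtain ⟨-, hΩ, hconv, hf, hH, -⟩ := hreg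
  have hF : ContDiffOn ℝ (⊤ : ℕ∞) (fun z => lamExp lam (f z)) Ω :=
    contDiff_lamExp.comp_contDiffOn hf
  have h := add_inner_gradient_lt_of_hessian_pos hΩ hconv (hF.differentiableOn (by simp))
    ((hF.gradient (m := 1) hΩ (by norm_cast)).differentiableOn one_ne_zero) hH hu hu' hne
  rw [(hfu'.hasGradientAt.lamExp_comp hlam).gradient, real_inner_smul_left] at h
  have hdiff := lamExp_sub_lamExp hlam (f u) (f u')
  exact lt_of_mul_lt_mul_left (by linarith) (Real.exp_pos _).le

theorem negCost_lamGrad_sub_le (hlam : lam ≠ 0) (hreg : IsRegularCConvex lam Ω f)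
    (hu : u ∈ Ω) (hu' : u' ∈ Ω) :
    negCost lam u (lamGrad lam f u') - ((f u : ℝ) : EReal) ≤
      conjTerm lam f u' (lamGrad lam f u') := by
  have hs : 0 < 1 - lam * ⟪gradient f u', u'⟫ := hreg.2.2.2.2.2 u' hu'
  rcases eq_or_ne u u' with rfl | hne
  · rw [negCost_sub_eq_conjTerm (by rw [one_add_mul_inner_lamGrad_self hs.ne']; positivity)]
  have hsub := hreg.inner_gradient_lt_lamExp hlam hu hu' hne
  by_cases hpos : 0 < 1 + lam * ⟪u, lamGrad lam f u'⟫
  · rw [negCost_sub_eq_conjTerm hpos, EReal.coe_le_coe_iff]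
    exact (conjTerm_lamGrad_lt hlam hs hsub hpos).le
  rcases hlam.lt_or_gt with hneg | hlam_pos
  · refine absurd ?_ hpos
    rw [one_add_mul_inner_lamGrad hs.ne']
    exact div_pos (one_add_mul_pos_of_le_lamExp hneg hsub.le) hs
  · rw [negCost, if_neg hpos, if_pos hlam_pos, EReal.bot_sub]
    exact bot_le

theorem lamConj_lamGrad (hlam : lam ≠ 0) (hreg : IsRegularCConvex lam Ω f) (hu' : u' ∈ Ω) :
    lamConj lam Ω f (lamGrad lam f u') = conjTerm lam f u' (lamGrad lam f u') := by
  refine le_antisymm (iSup₂_le fun u hu => hreg.negCost_lamGrad_sub_le hlam hu hu') ?_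
  have hs : 0 < 1 - lam * ⟪gradient f u', u'⟫ := hreg.2.2.2.2.2 u' hu'
  rw [← negCost_sub_eq_conjTerm (by rw [one_add_mul_inner_lamGrad_self hs.ne']; positivity)]
  exact le_iSup₂ (f := fun u _ => negCost lam u (lamGrad lam f u') - ((f u : ℝ) : EReal)) u' hu'

theorem contDiffOn_lamGrad (hreg : IsRegularCConvex lam Ω f) :
    ContDiffOn ℝ (⊤ : ℕ∞) (lamGrad lam f) Ω := by
  obtain ⟨-, hΩ, -, hf, -, hs⟩ := hreg
  have hgrad := hf.gradient (m := (⊤ : ℕ∞)) hΩ (mod_cast le_top)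
  exact ((contDiffOn_const.sub (contDiffOn_const.mul (hgrad.inner ℝ contDiffOn_id))).inv
    fun u hu => (hs u hu).ne').smul hgrad

theorem exists_injective_hasFDerivAt_lamGrad (hlam : lam ≠ 0) (hreg : IsRegularCConvex lam Ω f)
    (hu₀ : u₀ ∈ Ω) :
    ∃ D : EuclideanSpace ℝ (Fin d) →L[ℝ] EuclideanSpace ℝ (Fin d),
      Injective D ∧ HasFDerivAt (lamGrad lam f) D u₀ := by
  have hfΩ : ∀ u ∈ Ω, DifferentiableAt ℝ f u := fun u hu => hreg.differentiableAt hu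
  obtain ⟨-, hΩ, -, hf, hH, hs⟩ := hreg
  set F := fun z => lamExp lam (f z)
  have hF : ContDiffOn ℝ (⊤ : ℕ∞) F Ω := contDiff_lamExp.comp_contDiffOn hf
  have hgradF : ∀ u ∈ Ω, gradient F u = Real.exp (lam * f u) • gradient f u := fun u hu =>
    ((hfΩ u hu).hasGradientAt.lamExp_comp hlam).gradient
  have hV : (fun u => (lamDenom lam F u)⁻¹ • gradient F u) =ᶠ[𝓝 u₀] lamGrad lam f := by
    filter_upwards [hΩ.mem_nhds hu₀] with u hu
    rw [lamDenom_lamExp_comp hlam (hfΩ u hu), hgradF u hu, smul_smul, mul_inv,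
      mul_right_comm, inv_mul_cancel₀ (Real.exp_pos _).ne', one_mul, lamGrad]
  have hσ : lamDenom lam F u₀ ≠ 0 := by
    rw [lamDenom_lamExp_comp hlam (hfΩ u₀ hu₀)]
    exact mul_ne_zero (Real.exp_pos _).ne' (hs u₀ hu₀).ne'
  have hσF : lamDenom lam F u₀ + lam * ⟪u₀, gradient F u₀⟫ = Real.exp (lam * f u₀) := by
    rw [lamDenom, real_inner_comm, ← one_add_mul_lamExp hlam]
    ring
  have hHF : HasFDerivAt (gradient F) (fderiv ℝ (gradient F) u₀) u₀ :=
    (((hF.gradient (m := 1) hΩ (by norm_cast)).differentiableOn one_ne_zero).differentiableAt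
      (hΩ.mem_nhds hu₀)).hasFDerivAt
  have hFu₀ : DifferentiableAt ℝ F u₀ :=
    (hF.differentiableOn (by simp)).differentiableAt (hΩ.mem_nhds hu₀)
  refine ⟨_, injective_smul_add_smul_smulRight (hH u₀ hu₀) (inv_ne_zero hσ) ?_,
    (hasFDerivAt_inv_lamDenom_smul_gradient lam hFu₀ hHF hσ).congr_of_eventuallyEq hV.symm⟩
  have hsum : (lamDenom lam F u₀)⁻¹ + lam / lamDenom lam F u₀ ^ 2 * ⟪u₀, gradient F u₀⟫ =
      Real.exp (lam * f u₀) / lamDenom lam F u₀ ^ 2 := by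
    rw [← hσF]
    field_simp
  rw [hsum]
  positivity

theorem exists_localInverse_lamGrad (hlam : lam ≠ 0) (hreg : IsRegularCConvex lam Ω f)
    (hu₀ : u₀ ∈ Ω) :
    ∃ T : EuclideanSpace ℝ (Fin d) → EuclideanSpace ℝ (Fin d),
      ∃ T' : EuclideanSpace ℝ (Fin d) →L[ℝ] EuclideanSpace ℝ (Fin d),
        HasFDerivAt T T' (lamGrad lam f u₀) ∧ T (lamGrad lam f u₀) = u₀ ∧
          ∀ᶠ v in 𝓝 (lamGrad lam f u₀), T v ∈ Ω ∧ lamGrad lam f (T v) = v := by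
  have hΩ : IsOpen Ω := hreg.2.1
  obtain ⟨D, hDinj, hD⟩ := hreg.exists_injective_hasFDerivAt_lamGrad hlam hu₀
  set L := (LinearEquiv.ofInjectiveEndo D.toLinearMap hDinj).toContinuousLinearEquiv
  have hL : HasStrictFDerivAt (lamGrad lam f) (L : _ →L[ℝ] _) u₀ :=
    (hreg.contDiffOn_lamGrad.contDiffAt (hΩ.mem_nhds hu₀)).hasStrictFDerivAt' hD (by simp)
  refine ⟨hL.localInverse _ _ _, L.symm, hL.to_localInverse.hasFDerivAt,
    hL.localInverse_apply_image, ?_⟩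
  have hTΩ : ∀ᶠ v in 𝓝 (lamGrad lam f u₀), hL.localInverse _ _ _ v ∈ Ω :=
    hL.localInverse_continuousAt.preimage_mem_nhds
      (by rw [hL.localInverse_apply_image]; exact hΩ.mem_nhds hu₀)
  filter_upwards [hTΩ, hL.eventually_right_inverse] with v h1 h2 using ⟨h1, h2⟩

theorem hasGradientAt_toReal_lamConj (hlam : lam ≠ 0) (hreg : IsRegularCConvex lam Ω f)
    (hu₀ : u₀ ∈ Ω) :
    HasGradientAt (fun v => (lamConj lam Ω f v).toReal)
      ((1 - lam * ⟪gradient f u₀, u₀⟫) • u₀) (lamGrad lam f u₀) := by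
  obtain ⟨T, T', hT, hTu₀, hTinv⟩ := hreg.exists_localInverse_lamGrad hlam hu₀
  have hloc : (fun v => (lamConj lam Ω f v).toReal) =ᶠ[𝓝 (lamGrad lam f u₀)]
      fun v => conjTerm lam f (T v) v := by
    filter_upwards [hTinv] with v ⟨hTv, hVT⟩
    conv_lhs => rw [← hVT]
    rw [hreg.lamConj_lamGrad hlam hTv, EReal.toReal_coe, hVT]
  have henv := hasFDerivAt_conjTerm_lamGrad hlam (hreg.differentiableAt hu₀)
    (hreg.2.2.2.2.2 u₀ hu₀)
  have hcomp := HasFDerivAt.comp (lamGrad lam f u₀) (g := fun p => conjTerm lam f p.1 p.2)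
    (by rw [hTu₀]; exact henv) (hT.prodMk (hasFDerivAt_id _))
  rw [hasGradientAt_iff_hasFDerivAt]
  refine (hcomp.congr_of_eventuallyEq hloc).congr_fderiv ?_
  ext w
  simp

end IsRegularCConvex

end LamGrad

/-- For a regular `c_λ`-convex function `f` on `Ω`, the conjugate `f^{c_λ}` is
(real-valued and) differentiable on `Ω' = ∇^{c_λ} f(Ω)`, satisfies `1 − λ ∇f^{c_λ}(v)·v > 0`
there, and its λ-gradient `v ↦ ∇f^{c_λ}(v)/(1 − λ ∇f^{c_λ}(v)·v)` inverts `∇^{c_λ} f`. -/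
theorem lamGrad_conj_inverse {d : ℕ} (lam : ℝ) (hlam : lam ≠ 0)
    (Ω : Set (EuclideanSpace ℝ (Fin d))) (f : EuclideanSpace ℝ (Fin d) → ℝ)
    (hreg : IsRegularCConvex lam Ω f) :
    ∃ g : EuclideanSpace ℝ (Fin d) → ℝ,
      (∀ v ∈ lamGrad lam f '' Ω, ((g v : ℝ) : EReal) = lamConj lam Ω f v) ∧
      (∀ v ∈ lamGrad lam f '' Ω, DifferentiableAt ℝ g v ∧
        0 < 1 - lam * ⟪gradient g v, v⟫) ∧
      ∀ u ∈ Ω, lamGrad lam g (lamGrad lam f u) = u := by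
  have hs : ∀ u ∈ Ω, 0 < 1 - lam * ⟪gradient f u, u⟫ := hreg.2.2.2.2.2
  have hgrad := fun u (hu : u ∈ Ω) => hreg.hasGradientAt_toReal_lamConj hlam hu
  have hden : ∀ u ∈ Ω, 1 - lam * ⟪gradient (fun v => (lamConj lam Ω f v).toReal)
      (lamGrad lam f u), lamGrad lam f u⟫ = 1 - lam * ⟪gradient f u, u⟫ := fun u hu => by
    rw [(hgrad u hu).gradient, one_sub_mul_inner_smul_lamGrad (hs u hu).ne']
  refine ⟨fun v => (lamConj lam Ω f v).toReal, ?_, ?_, fun u hu => ?_⟩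
  · rintro _ ⟨u, hu, rfl⟩
    dsimp only
    rw [hreg.lamConj_lamGrad hlam hu, EReal.toReal_coe]
  · rintro _ ⟨u, hu, rfl⟩
    exact ⟨(hgrad u hu).differentiableAt, hden u hu ▸ hs u hu⟩
  · rw [lamGrad, hden u hu, (hgrad u hu).gradient, inv_smul_smul₀ (hs u hu).ne']
end
end

section
/- Fix λ < 1 with λ ≠ 0 and q = 1 − λ. Consider a λ-exponential family p(·;ϑ) = exp_q(ϑ·F(·))·e^{−φ_λ(ϑ)} on (𝒳, ν) whose natural parameter set Ω is nonempty open convex, with φ_λ smooth (differentiation under the integral sign valid) and satisfying 1 − λ∇φ_λ(ϑ)·ϑ > 0 on Ω, and such that the Hessian of (1/λ)(e^{λφ_λ} − 1) is strictly positive definite on Ω; assume also the support condition holds. Then: (a) for all ϑ, ϑ' ∈ Ω, the λ-logarithmic divergence of φ_λ equals the Rényi divergence of order q with arguments swapped: φ_λ(ϑ) − φ_λ(ϑ') − (1/λ)·log(1 + λ ∇φ_λ(ϑ')·(ϑ − ϑ')) = (1/(q−1))·log ∫ p(x;ϑ')^q · p(x;ϑ)^{1−q} dν(x); and (b) for η =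 ∇^{c_λ}φ_λ(ϑ) = ∇φ_λ(ϑ)/(1 − λ∇φ_λ(ϑ)·ϑ), the c_λ-conjugate satisfies φ_λ^{c_λ}(η) = −(1/(1−q))·log ∫ p(x;ϑ)^q dν(x), the negative Rényi entropy of order q of p(·;ϑ). -/
open MeasureTheory Real
open scoped RealInnerProductSpace ENNReal BigOperators

noncomputable section

/-!
Write `m_ϑ = [1 + λ ϑ·F]₊`, so that `p_ϑ'^q p_ϑ^{1-q} ∝ m_ϑ'^{1/λ - 1} m_ϑ`, and on the common
support `m_ϑ = m_ϑ' + λ (ϑ - ϑ')·F`. Differentiating under the integral sign says that the escort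
weight `m_ϑ'^{1/λ - 1}` has `F`-moment `e^{φ(ϑ')} ∇φ(ϑ')`, and it has mass `e^{φ(ϑ')}` against
`m_ϑ'`; hence `∫ p_ϑ'^q p_ϑ^{1-q} = e^{λ(φ(ϑ') - φ(ϑ))} (1 + λ ∇φ(ϑ')·(ϑ - ϑ'))`, whose logarithm
is (a). Since a Rényi divergence is nonnegative, (a) shows that `u ↦ (1/λ) log(1 + λ u·η) - φ(u)`
is maximised at `u = ϑ`, and the same moments give `∫ p_ϑ^q = e^{λ φ(ϑ)} (1 - λ ∇φ(ϑ)·ϑ)`, which is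
(b).
-/

section Renyi

variable {X : Type*} [MeasurableSpace X] {ν : Measure X} {f g : X → ℝ} {q : ℝ}

def renyiDiv (q : ℝ) (ν : Measure X) (f g : X → ℝ) : ℝ :=
  1 / (q - 1) * log (∫ x, f x ^ q * g x ^ (1 - q) ∂ν)

lemma mul_add_one_sub_mul_le_rpow_mul_rpow {a b : ℝ} (hq : 1 ≤ q) (ha : 0 ≤ a) (hb : 0 < b) :
    q * a + (1 - q) * b ≤ a ^ q * b ^ (1 - q) := by
  have hber := one_add_mul_self_le_rpow_one_add (s := a / b - 1)
    (by linarith [div_nonneg ha hb.le]) hq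
  rw [add_sub_cancel, div_rpow ha hb.le] at hber
  calc q * a + (1 - q) * b = b * (1 + q * (a / b - 1)) := by field_simp; ring
    _ ≤ b * (a ^ q / b ^ q) := mul_le_mul_of_nonneg_left hber hb.le
    _ = a ^ q * b ^ (1 - q) := by rw [rpow_sub hb, rpow_one]; field_simp

lemma integral_rpow_mul_rpow_le_one (hq0 : 0 ≤ q) (hq1 : q ≤ 1) (hf0 : 0 ≤ f) (hg0 : 0 ≤ g)
    (hf1 : ∫ x, f x ∂ν = 1) (hg1 : ∫ x, g x ∂ν = 1) :
    ∫ x, f x ^ q * g x ^ (1 - q) ∂ν ≤ 1 := by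
  have hf : Integrable f ν := .of_integral_ne_zero (by simp [hf1])
  have hg : Integrable g ν := .of_integral_ne_zero (by simp [hg1])
  calc ∫ x, f x ^ q * g x ^ (1 - q) ∂ν ≤ ∫ x, (q * f x + (1 - q) * g x) ∂ν :=
        integral_mono_of_nonneg
          (ae_of_all _ fun x => mul_nonneg (rpow_nonneg (hf0 x) _) (rpow_nonneg (hg0 x) _))
          ((hf.const_mul q).add (hg.const_mul _))
          (ae_of_all _ fun x => geom_mean_le_arith_mean2_weighted hq0 (sub_nonneg.2 hq1)
            (hf0 x) (hg0 x) (by ring))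
    _ = 1 := by
        rw [integral_add (hf.const_mul q) (hg.const_mul _), integral_const_mul,
          integral_const_mul, hf1, hg1]
        ring

lemma one_le_integral_rpow_mul_rpow (hq : 1 ≤ q) (hf0 : 0 ≤ f) (hg : ∀ᵐ x ∂ν, 0 < g x)
    (hfg : Integrable (fun x => f x ^ q * g x ^ (1 - q)) ν)
    (hf1 : ∫ x, f x ∂ν = 1) (hg1 : ∫ x, g x ∂ν = 1) :
    1 ≤ ∫ x, f x ^ q * g x ^ (1 - q) ∂ν := by
  have hf : Integrable f ν := .of_integral_ne_zero (by simp [hf1])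
  have hg' : Integrable g ν := .of_integral_ne_zero (by simp [hg1])
  calc (1 : ℝ) = ∫ x, (q * f x + (1 - q) * g x) ∂ν := by
        rw [integral_add (hf.const_mul q) (hg'.const_mul _), integral_const_mul,
          integral_const_mul, hf1, hg1]
        ring
    _ ≤ ∫ x, f x ^ q * g x ^ (1 - q) ∂ν :=
        integral_mono_ae ((hf.const_mul q).add (hg'.const_mul _)) hfg
          (hg.mono fun x hx => mul_add_one_sub_mul_le_rpow_mul_rpow hq (hf0 x) hx)

lemma renyiDiv_nonneg (hq0 : 0 ≤ q) (hf0 : 0 ≤ f) (hg0 : 0 ≤ g)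
    (hg : 1 < q → ∀ᵐ x ∂ν, 0 < g x) (hfg : Integrable (fun x => f x ^ q * g x ^ (1 - q)) ν)
    (hf1 : ∫ x, f x ∂ν = 1) (hg1 : ∫ x, g x ∂ν = 1) :
    0 ≤ renyiDiv q ν f g := by
  rcases lt_trichotomy q 1 with hq1 | rfl | hq1
  · refine mul_nonneg_of_nonpos_of_nonpos
      (one_div_nonpos.2 (sub_nonpos.2 hq1.le)) (log_nonpos ?_ ?_)
    · exact integral_nonneg fun x => mul_nonneg (rpow_nonneg (hf0 x) _) (rpow_nonneg (hg0 x) _)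
    · exact integral_rpow_mul_rpow_le_one hq0 hq1.le hf0 hg0 hf1 hg1
  · simp [renyiDiv]
  · exact mul_nonneg (one_div_nonneg.2 (sub_nonneg.2 hq1.le))
      (log_nonneg (one_le_integral_rpow_mul_rpow hq1.le hf0 (hg hq1) hfg hf1 hg1))

lemma integral_rpow_mul_rpow_pos {a b : ℝ} (hf0 : 0 ≤ f) (hg0 : 0 ≤ g)
    (hf1 : ∫ x, f x ∂ν = 1) (hfg : {x | 0 < f x} =ᵐ[ν] {x | 0 < g x})
    (hint : Integrable (fun x => f x ^ a * g x ^ b) ν) :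
    0 < ∫ x, f x ^ a * g x ^ b ∂ν := by
  have hf : Integrable f ν := .of_integral_ne_zero (by simp [hf1])
  have hsupp : Function.support f = {x | 0 < f x} := by
    ext x; exact (hf0 x).lt_iff_ne'.symm
  have hpos : 0 < ν {x | 0 < f x} := by
    rw [← hsupp, ← integral_pos_iff_support_of_nonneg_ae (ae_of_all _ hf0) hf, hf1]
    exact one_pos
  rw [integral_pos_iff_support_of_nonneg_ae
    (ae_of_all _ fun x => mul_nonneg (rpow_nonneg (hf0 x) _) (rpow_nonneg (hg0 x) _)) hint]
  calc 0 < ν {x | 0 < f x} := hpos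
    _ = ν ({x | 0 < f x} ∩ {x | 0 < g x}) := by
        rw [← measure_congr ((Filter.EventuallyEq.refl _ _).inter hfg), Set.inter_self]
    _ ≤ _ := measure_mono fun x hx => (mul_pos (rpow_pos_of_pos hx.1 _)
        (rpow_pos_of_pos hx.2 _)).ne'

end Renyi

section LambdaExponentialFamily

variable {X E : Type*} [NormedAddCommGroup E] [InnerProductSpace ℝ E] {lam : ℝ}

/-- `t ↦ t^{1/λ}` on `t > 0`, extended by `0^{1/λ}` computed in `ℝ≥0∞`: `0` for `λ > 0` and `∞`
for `λ < 0`. Applied to `t = 1 + λ ϑ·F(x)` it is `exp_q(ϑ·F(x))`, and its integral is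
`e^{φ_λ(ϑ)}`. -/
def qExpENNReal (lam t : ℝ) : ℝ≥0∞ :=
  if 0 < t then ENNReal.ofReal (t ^ (1 / lam)) else if 0 < lam then 0 else ⊤

lemma max_zero_rpow_sub_one_mul {a : ℝ} (ha0 : a ≠ 0) (ha1 : a ≠ 1) (t : ℝ) :
    max t 0 ^ (a - 1) * t = max t 0 ^ a := by
  rcases lt_or_ge 0 t with ht | ht
  · rw [max_eq_left ht.le, ← rpow_add_one ht.ne', sub_add_cancel]
  · rw [max_eq_right ht, zero_rpow (sub_ne_zero.2 ha1), zero_rpow ha0, zero_mul]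

def lamExpDensity (lam : ℝ) (F : X → E) (φ : E → ℝ) (ϑ : E) (x : X) : ℝ :=
  max (1 + lam * ⟪ϑ, F x⟫) 0 ^ (1 / lam) * exp (-φ ϑ)

variable {F : X → E} {φ : E → ℝ}

lemma lamExpDensity_nonneg (ϑ : E) (x : X) : 0 ≤ lamExpDensity lam F φ ϑ x :=
  mul_nonneg (rpow_nonneg (le_max_right _ _) _) (exp_pos _).le

lemma lamExpDensity_pos_iff (hlam0 : lam ≠ 0) {ϑ : E} {x : X} :
    0 < lamExpDensity lam F φ ϑ x ↔ 0 < 1 + lam * ⟪ϑ, F x⟫ := by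
  rw [lamExpDensity, mul_pos_iff_of_pos_right (exp_pos _)]
  rcases lt_or_ge 0 (1 + lam * ⟪ϑ, F x⟫) with h | h
  · simp [h, h.le, rpow_pos_of_pos h]
  · simp [max_eq_right h, zero_rpow (inv_ne_zero hlam0), h.not_gt]

lemma lamExpDensity_rpow (r : ℝ) (ϑ : E) (x : X) :
    lamExpDensity lam F φ ϑ x ^ r
      = max (1 + lam * ⟪ϑ, F x⟫) 0 ^ (r / lam) * exp (-(r * φ ϑ)) := by
  rw [lamExpDensity, mul_rpow (rpow_nonneg (le_max_right _ _) _) (exp_pos _).le,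
    ← rpow_mul (le_max_right _ _), ← exp_mul]
  congr 2 <;> ring

variable [MeasurableSpace X] {ν : Measure X}

section Partition

variable {t : X → ℝ}

lemma ae_pos_of_lintegral_qExpENNReal_ne_top (hlam : lam < 0) (ht : Measurable t)
    (h : ∫⁻ x, qExpENNReal lam (t x) ∂ν ≠ ⊤) : ∀ᵐ x ∂ν, 0 < t x := by
  have hmeas : Measurable fun x => qExpENNReal lam (t x) :=
    Measurable.ite (measurableSet_lt measurable_const ht) (ht.pow_const _).ennreal_ofReal
      measurable_const
  filter_upwards [ae_lt_top hmeas h] with x hx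
  by_contra hneg
  simp [qExpENNReal, hneg, hlam.not_gt] at hx

lemma qExpENNReal_ae_eq (hlam0 : lam ≠ 0) (ht : lam < 0 → ∀ᵐ x ∂ν, 0 < t x) :
    (fun x => qExpENNReal lam (t x)) =ᵐ[ν] fun x => ENNReal.ofReal (max (t x) 0 ^ (1 / lam)) := by
  rcases hlam0.lt_or_gt with hneg | hpos
  · filter_upwards [ht hneg] with x hx
    simp [qExpENNReal, hx, hx.le]
  · refine ae_of_all _ fun x => ?_
    by_cases hx : 0 < t x
    · simp [qExpENNReal, hx, hx.le]
    · simp [qExpENNReal, hx, hpos, max_eq_right (not_lt.1 hx), zero_rpow (inv_ne_zero hlam0)]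

lemma integral_max_rpow_of_lintegral_qExpENNReal (hlam0 : lam ≠ 0) (ht : Measurable t) {Z : ℝ}
    (hZ0 : 0 ≤ Z) (h : ∫⁻ x, qExpENNReal lam (t x) ∂ν = ENNReal.ofReal Z) :
    Integrable (fun x => max (t x) 0 ^ (1 / lam)) ν ∧
      ∫ x, max (t x) 0 ^ (1 / lam) ∂ν = Z := by
  have hpos : lam < 0 → ∀ᵐ x ∂ν, 0 < t x := fun hlam =>
    ae_pos_of_lintegral_qExpENNReal_ne_top hlam ht (h ▸ ENNReal.ofReal_ne_top)
  rw [lintegral_congr_ae (qExpENNReal_ae_eq hlam0 hpos)] at h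
  have hnn : 0 ≤ᵐ[ν] fun x => max (t x) 0 ^ (1 / lam) :=
    ae_of_all _ fun x => rpow_nonneg (le_max_right _ _) _
  have hm : AEStronglyMeasurable (fun x => max (t x) 0 ^ (1 / lam)) ν :=
    ((ht.max measurable_const).pow_const _).aestronglyMeasurable
  refine ⟨⟨hm, (hasFiniteIntegral_iff_ofReal hnn).2 (h ▸ ENNReal.ofReal_lt_top)⟩, ?_⟩
  rw [integral_eq_lintegral_of_nonneg_ae hnn hm, h, ENNReal.toReal_ofReal hZ0]

end Partition

lemma integral_escort_mul_affine [CompleteSpace E] (hlam0 : lam ≠ 0) (hlam1 : lam ≠ 1)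
    {ϑ g : E} {Z : ℝ}
    (hI : Integrable (fun x => max (1 + lam * ⟪ϑ, F x⟫) 0 ^ (1 / lam)) ν)
    (hIZ : ∫ x, max (1 + lam * ⟪ϑ, F x⟫) 0 ^ (1 / lam) ∂ν = Z)
    (hJ : Integrable (fun x => max (1 + lam * ⟪ϑ, F x⟫) 0 ^ (1 / lam - 1) • F x) ν)
    (hJZ : Z • g = ∫ x, max (1 + lam * ⟪ϑ, F x⟫) 0 ^ (1 / lam - 1) • F x ∂ν) (w : E) :
    Integrable (fun x => max (1 + lam * ⟪ϑ, F x⟫) 0 ^ (1 / lam - 1) * (1 + lam * ⟪w, F x⟫)) ν ∧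
      ∫ x, max (1 + lam * ⟪ϑ, F x⟫) 0 ^ (1 / lam - 1) * (1 + lam * ⟪w, F x⟫) ∂ν
        = Z * (1 + lam * ⟪g, w - ϑ⟫) := by
  have ha1 : 1 / lam ≠ 1 := fun h => hlam1 (by rw [one_div, inv_eq_one] at h; exact h)
  have hsplit : (fun x => max (1 + lam * ⟪ϑ, F x⟫) 0 ^ (1 / lam - 1) * (1 + lam * ⟪w, F x⟫))
      = fun x => max (1 + lam * ⟪ϑ, F x⟫) 0 ^ (1 / lam)
        + lam * ⟪w - ϑ, max (1 + lam * ⟪ϑ, F x⟫) 0 ^ (1 / lam - 1) • F x⟫ := by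
    funext x
    rw [← max_zero_rpow_sub_one_mul (one_div_ne_zero hlam0) ha1, inner_smul_right,
      inner_sub_left]
    ring
  have hK := (hJ.const_inner (𝕜 := ℝ) (w - ϑ)).const_mul lam
  rw [hsplit]
  refine ⟨hI.add hK, ?_⟩
  rw [integral_add hI hK, integral_const_mul, integral_inner hJ, ← hJZ, hIZ, inner_smul_right,
    real_inner_comm]
  ring

variable [MeasurableSpace E] [OpensMeasurableSpace E]

lemma measurable_one_add_mul_inner (hF : Measurable F) (lam : ℝ) (ϑ : E) :
    Measurable fun x => 1 + lam * ⟪ϑ, F x⟫ :=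
  measurable_const.add (((continuous_const.inner continuous_id).measurable.comp hF).const_mul lam)

lemma ae_lamExpDensity_pos (hlam : lam < 0) (hF : Measurable F) {ϑ : E}
    (hZ : ∫⁻ x, qExpENNReal lam (1 + lam * ⟪ϑ, F x⟫) ∂ν ≠ ⊤) :
    ∀ᵐ x ∂ν, 0 < lamExpDensity lam F φ ϑ x := by
  filter_upwards [ae_pos_of_lintegral_qExpENNReal_ne_top hlam
    (measurable_one_add_mul_inner hF lam ϑ) hZ] with x hx
  exact (lamExpDensity_pos_iff hlam.ne).2 hx

lemma integral_lamExpDensity_rpow_mul_rpow [CompleteSpace E] (hlam0 : lam ≠ 0) (hlam1 : lam ≠ 1)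
    (hF : Measurable F) {ϑ' ϑ g : E}
    (hZ : ∫⁻ x, qExpENNReal lam (1 + lam * ⟪ϑ', F x⟫) ∂ν = ENNReal.ofReal (exp (φ ϑ')))
    (hJ : Integrable (fun x => max (1 + lam * ⟪ϑ', F x⟫) 0 ^ (1 / lam - 1) • F x) ν)
    (hJZ : exp (φ ϑ') • g = ∫ x, max (1 + lam * ⟪ϑ', F x⟫) 0 ^ (1 / lam - 1) • F x ∂ν)
    (hsupp : {x | 0 < lamExpDensity lam F φ ϑ' x} =ᵐ[ν] {x | 0 < lamExpDensity lam F φ ϑ x}) :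
    Integrable (fun x => lamExpDensity lam F φ ϑ' x ^ (1 - lam)
        * lamExpDensity lam F φ ϑ x ^ lam) ν ∧
      ∫ x, lamExpDensity lam F φ ϑ' x ^ (1 - lam) * lamExpDensity lam F φ ϑ x ^ lam ∂ν
        = exp (lam * (φ ϑ' - φ ϑ)) * (1 + lam * ⟪g, ϑ - ϑ'⟫) := by
  obtain ⟨hI, hIZ⟩ := integral_max_rpow_of_lintegral_qExpENNReal hlam0
    (measurable_one_add_mul_inner hF lam _) (exp_pos _).le hZ
  obtain ⟨hint, hval⟩ := integral_escort_mul_affine hlam0 hlam1 hI hIZ hJ hJZ ϑ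
  have hae : (fun x => lamExpDensity lam F φ ϑ' x ^ (1 - lam) * lamExpDensity lam F φ ϑ x ^ lam)
      =ᵐ[ν] fun x => exp (-(1 - lam) * φ ϑ' - lam * φ ϑ)
        * (max (1 + lam * ⟪ϑ', F x⟫) 0 ^ (1 / lam - 1) * (1 + lam * ⟪ϑ, F x⟫)) := by
    filter_upwards [Filter.eventuallyEq_set.1 hsupp] with x hx
    -- off the common support the escort weight vanishes, for `λ < 0` by the convention `0 ^ r = 0`
    have hm : max (1 + lam * ⟪ϑ', F x⟫) 0 ^ (1 / lam - 1) * max (1 + lam * ⟪ϑ, F x⟫) 0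
        = max (1 + lam * ⟪ϑ', F x⟫) 0 ^ (1 / lam - 1) * (1 + lam * ⟪ϑ, F x⟫) := by
      by_cases h' : 0 < 1 + lam * ⟪ϑ', F x⟫
      · have h : 0 < 1 + lam * ⟪ϑ, F x⟫ := (lamExpDensity_pos_iff (φ := φ) hlam0).1
          (hx.1 ((lamExpDensity_pos_iff hlam0).2 h'))
        rw [max_eq_left h.le]
      · have ha1 : 1 / lam - 1 ≠ 0 := fun h => hlam1 (by field_simp at h; linarith)
        rw [max_eq_right (not_lt.1 h'), zero_rpow ha1, zero_mul, zero_mul]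
    rw [lamExpDensity_rpow, lamExpDensity_rpow, sub_div, div_self hlam0, rpow_one, ← hm,
      sub_eq_add_neg _ (lam * φ ϑ), exp_add]
    ring_nf
  refine ⟨(hint.const_mul _).congr hae.symm, ?_⟩
  rw [integral_congr_ae hae, integral_const_mul, hval, ← mul_assoc, ← exp_add]
  ring_nf

lemma one_add_inner_pos_of_lamExpDensity [CompleteSpace E] (hlam0 : lam ≠ 0) (hlam1 : lam ≠ 1)
    (hF : Measurable F) {ϑ' ϑ g : E}
    (hZ : ∫⁻ x, qExpENNReal lam (1 + lam * ⟪ϑ', F x⟫) ∂ν = ENNReal.ofReal (exp (φ ϑ')))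
    (hJ : Integrable (fun x => max (1 + lam * ⟪ϑ', F x⟫) 0 ^ (1 / lam - 1) • F x) ν)
    (hJZ : exp (φ ϑ') • g = ∫ x, max (1 + lam * ⟪ϑ', F x⟫) 0 ^ (1 / lam - 1) • F x ∂ν)
    (hnorm : ∫ x, lamExpDensity lam F φ ϑ' x ∂ν = 1)
    (hsupp : {x | 0 < lamExpDensity lam F φ ϑ' x} =ᵐ[ν] {x | 0 < lamExpDensity lam F φ ϑ x}) :
    0 < 1 + lam * ⟪g, ϑ - ϑ'⟫ := by
  obtain ⟨hint, hval⟩ := integral_lamExpDensity_rpow_mul_rpow hlam0 hlam1 hF hZ hJ hJZ hsupp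
  have hpos := integral_rpow_mul_rpow_pos (lamExpDensity_nonneg ϑ') (lamExpDensity_nonneg ϑ)
    hnorm hsupp hint
  rw [hval] at hpos
  exact pos_of_mul_pos_right hpos (exp_pos _).le

theorem lamLogDiv_eq_renyiDiv [CompleteSpace E] (hlam0 : lam ≠ 0) (hlam1 : lam ≠ 1)
    (hF : Measurable F) {ϑ' ϑ g : E}
    (hZ : ∫⁻ x, qExpENNReal lam (1 + lam * ⟪ϑ', F x⟫) ∂ν = ENNReal.ofReal (exp (φ ϑ')))
    (hJ : Integrable (fun x => max (1 + lam * ⟪ϑ', F x⟫) 0 ^ (1 / lam - 1) • F x) ν)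
    (hJZ : exp (φ ϑ') • g = ∫ x, max (1 + lam * ⟪ϑ', F x⟫) 0 ^ (1 / lam - 1) • F x ∂ν)
    (hnorm : ∫ x, lamExpDensity lam F φ ϑ' x ∂ν = 1)
    (hsupp : {x | 0 < lamExpDensity lam F φ ϑ' x} =ᵐ[ν] {x | 0 < lamExpDensity lam F φ ϑ x}) :
    φ ϑ - φ ϑ' - 1 / lam * log (1 + lam * ⟪g, ϑ - ϑ'⟫)
      = renyiDiv (1 - lam) ν (lamExpDensity lam F φ ϑ') (lamExpDensity lam F φ ϑ) := by
  have hD := one_add_inner_pos_of_lamExpDensity hlam0 hlam1 hF hZ hJ hJZ hnorm hsupp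
  rw [renyiDiv, sub_sub_cancel, sub_sub_cancel_left,
    (integral_lamExpDensity_rpow_mul_rpow hlam0 hlam1 hF hZ hJ hJZ hsupp).2,
    log_mul (exp_ne_zero _) hD.ne', log_exp]
  field_simp
  ring

lemma integral_lamExpDensity_rpow_one_sub [CompleteSpace E] (hlam0 : lam ≠ 0) (hlam1 : lam ≠ 1)
    (hF : Measurable F) {ϑ g : E}
    (hZ : ∫⁻ x, qExpENNReal lam (1 + lam * ⟪ϑ, F x⟫) ∂ν = ENNReal.ofReal (exp (φ ϑ)))
    (hJ : Integrable (fun x => max (1 + lam * ⟪ϑ, F x⟫) 0 ^ (1 / lam - 1) • F x) ν)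
    (hJZ : exp (φ ϑ) • g = ∫ x, max (1 + lam * ⟪ϑ, F x⟫) 0 ^ (1 / lam - 1) • F x ∂ν) :
    ∫ x, lamExpDensity lam F φ ϑ x ^ (1 - lam) ∂ν = exp (lam * φ ϑ) * (1 - lam * ⟪g, ϑ⟫) := by
  obtain ⟨hI, hIZ⟩ := integral_max_rpow_of_lintegral_qExpENNReal hlam0
    (measurable_one_add_mul_inner hF lam _) (exp_pos _).le hZ
  have h := (integral_escort_mul_affine hlam0 hlam1 hI hIZ hJ hJZ 0).2
  simp only [inner_zero_left, mul_zero, add_zero, mul_one, zero_sub, inner_neg_right] at h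
  simp_rw [lamExpDensity_rpow, sub_div, div_self hlam0]
  rw [integral_mul_const, h, mul_right_comm, ← exp_add]
  ring_nf

end LambdaExponentialFamily

section LamConjugate

variable {d : ℕ} {lam : ℝ}

lemma negCost_of_pos {u v : EuclideanSpace ℝ (Fin d)} (h : 0 < 1 + lam * ⟪u, v⟫) :
    negCost lam u v = ((1 / lam * log (1 + lam * ⟪u, v⟫) : ℝ) : EReal) :=
  if_pos h

lemma mul_one_add_inner_lamGrad {f : EuclideanSpace ℝ (Fin d) → ℝ} {ϑ : EuclideanSpace ℝ (Fin d)}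
    (hs : 1 - lam * ⟪gradient f ϑ, ϑ⟫ ≠ 0) (u : EuclideanSpace ℝ (Fin d)) :
    (1 - lam * ⟪gradient f ϑ, ϑ⟫) * (1 + lam * ⟪u, lamGrad lam f ϑ⟫)
      = 1 + lam * ⟪gradient f ϑ, u - ϑ⟫ := by
  rw [lamGrad, inner_smul_right, inner_sub_right, real_inner_comm u]
  field_simp
  ring

lemma lamConj_eq_of_le {Ω : Set (EuclideanSpace ℝ (Fin d))} {f : EuclideanSpace ℝ (Fin d) → ℝ}
    {v ϑ : EuclideanSpace ℝ (Fin d)} {V : EReal} (hϑ : ϑ ∈ Ω)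
    (hle : ∀ u ∈ Ω, negCost lam u v - f u ≤ V) (heq : negCost lam ϑ v - f ϑ = V) :
    lamConj lam Ω f v = V :=
  le_antisymm (iSup₂_le hle)
    (heq ▸ le_iSup₂ (f := fun u (_ : u ∈ Ω) => negCost lam u v - (f u : EReal)) ϑ hϑ)

theorem lamConj_lamGrad_eq {Ω : Set (EuclideanSpace ℝ (Fin d))}
    {f : EuclideanSpace ℝ (Fin d) → ℝ} {ϑ : EuclideanSpace ℝ (Fin d)} (hϑ : ϑ ∈ Ω)
    (hs : 0 < 1 - lam * ⟪gradient f ϑ, ϑ⟫)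
    (hdiv : ∀ u ∈ Ω, 0 < 1 + lam * ⟪gradient f ϑ, u - ϑ⟫ ∧
      0 ≤ f u - f ϑ - 1 / lam * log (1 + lam * ⟪gradient f ϑ, u - ϑ⟫)) :
    lamConj lam Ω f (lamGrad lam f ϑ)
      = ((-f ϑ - 1 / lam * log (1 - lam * ⟪gradient f ϑ, ϑ⟫) : ℝ) : EReal) := by
  have hfac := mul_one_add_inner_lamGrad (f := f) hs.ne'
  refine lamConj_eq_of_le hϑ (fun u hu => ?_) ?_
  · obtain ⟨hD, hdivu⟩ := hdiv u hu
    have hA : 0 < 1 + lam * ⟪u, lamGrad lam f ϑ⟫ := pos_of_mul_pos_right (hfac u ▸ hD) hs.le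
    rw [← hfac u, log_mul hs.ne' hA.ne', mul_add] at hdivu
    rw [negCost_of_pos hA, ← EReal.coe_sub, EReal.coe_le_coe_iff]
    linarith
  · have hA : 1 + lam * ⟪ϑ, lamGrad lam f ϑ⟫ = (1 - lam * ⟪gradient f ϑ, ϑ⟫)⁻¹ := by
      have h := hfac ϑ
      rw [sub_self, inner_zero_right, mul_zero, add_zero] at h
      exact eq_inv_of_mul_eq_one_right h
    rw [negCost_of_pos (hA ▸ inv_pos.2 hs), hA, log_inv, ← EReal.coe_sub]
    congr 1
    ring

end LamConjugate

theorem lambdaExp_Renyi_duality_general {d : ℕ} {X : Type*} [MeasurableSpace X] (ν : Measure X)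
    (lam q : ℝ) (hlam0 : lam ≠ 0) (hlam1 : lam < 1) (hq : q = 1 - lam)
    (F : X → EuclideanSpace ℝ (Fin d)) (hF : Measurable F)
    (Ω : Set (EuclideanSpace ℝ (Fin d)))
    (φ : EuclideanSpace ℝ (Fin d) → ℝ)
    (p : EuclideanSpace ℝ (Fin d) → X → ℝ)
    (hp : ∀ ϑ x, p ϑ x = (max (1 + lam * ⟪ϑ, F x⟫) 0) ^ (1 / lam) * Real.exp (-φ ϑ))
    (hnorm : ∀ ϑ ∈ Ω, ∫ x, p ϑ x ∂ν = 1)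
    (hZ : ∀ ϑ ∈ Ω,
      ∫⁻ x, (if 0 < 1 + lam * ⟪ϑ, F x⟫ then
          ENNReal.ofReal ((1 + lam * ⟪ϑ, F x⟫) ^ (1 / lam))
        else if 0 < lam then 0 else ⊤) ∂ν = ENNReal.ofReal (Real.exp (φ ϑ)))
    (hInt : ∀ ϑ ∈ Ω,
      Integrable (fun x => ((max (1 + lam * ⟪ϑ, F x⟫) 0) ^ (1 / lam - 1)) • F x) ν)
    (hDUI : ∀ ϑ ∈ Ω, Real.exp (φ ϑ) • gradient φ ϑ
      = ∫ x, ((max (1 + lam * ⟪ϑ, F x⟫) 0) ^ (1 / lam - 1)) • F x ∂ν)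
    (hpos : ∀ ϑ ∈ Ω, 0 < 1 - lam * ⟪gradient φ ϑ, ϑ⟫)
    (X₀ : Set X) (hsupp : ∀ ϑ ∈ Ω, {x | 0 < p ϑ x} =ᵐ[ν] X₀) :
    (∀ ϑ ∈ Ω, ∀ ϑ' ∈ Ω,
      φ ϑ - φ ϑ' - (1 / lam) * Real.log (1 + lam * ⟪gradient φ ϑ', ϑ - ϑ'⟫)
        = (1 / (q - 1)) * Real.log (∫ x, p ϑ' x ^ q * p ϑ x ^ (1 - q) ∂ν)) ∧
    (∀ ϑ ∈ Ω, lamConj lam Ω φ (lamGrad lam φ ϑ)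
        = (((-(1 / (1 - q)) * Real.log (∫ x, p ϑ x ^ q ∂ν)) : ℝ) : EReal)) := by
  obtain rfl : p = lamExpDensity lam F φ := funext fun ϑ => funext (hp ϑ)
  subst hq
  have hlam1' : lam ≠ 1 := hlam1.ne
  have hsupp' : ∀ ϑ ∈ Ω, ∀ ϑ' ∈ Ω,
      {x | 0 < lamExpDensity lam F φ ϑ x} =ᵐ[ν] {x | 0 < lamExpDensity lam F φ ϑ' x} :=
    fun ϑ hϑ ϑ' hϑ' => (hsupp ϑ hϑ).trans (hsupp ϑ' hϑ').symm
  have hdiv : ∀ ϑ ∈ Ω, ∀ ϑ' ∈ Ω, φ ϑ - φ ϑ' - 1 / lam * log (1 + lam * ⟪gradient φ ϑ', ϑ - ϑ'⟫)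
      = renyiDiv (1 - lam) ν (lamExpDensity lam F φ ϑ') (lamExpDensity lam F φ ϑ) :=
    fun ϑ hϑ ϑ' hϑ' => lamLogDiv_eq_renyiDiv hlam0 hlam1' hF (hZ ϑ' hϑ') (hInt ϑ' hϑ')
      (hDUI ϑ' hϑ') (hnorm ϑ' hϑ') (hsupp' ϑ' hϑ' ϑ hϑ)
  refine ⟨hdiv, fun ϑ hϑ => ?_⟩
  have hentropy : -(1 / (1 - (1 - lam))) * log (∫ x, lamExpDensity lam F φ ϑ x ^ (1 - lam) ∂ν)
      = -φ ϑ - 1 / lam * log (1 - lam * ⟪gradient φ ϑ, ϑ⟫) := by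
    rw [integral_lamExpDensity_rpow_one_sub hlam0 hlam1' hF (hZ ϑ hϑ) (hInt ϑ hϑ) (hDUI ϑ hϑ),
      sub_sub_cancel, log_mul (exp_ne_zero _) (hpos ϑ hϑ).ne', log_exp]
    field_simp
    ring
  rw [hentropy]
  refine lamConj_lamGrad_eq hϑ (hpos ϑ hϑ) fun u hu =>
    ⟨one_add_inner_pos_of_lamExpDensity hlam0 hlam1' hF (hZ ϑ hϑ) (hInt ϑ hϑ) (hDUI ϑ hϑ)
      (hnorm ϑ hϑ) (hsupp' ϑ hϑ u hu), ?_⟩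
  rw [hdiv u hu ϑ hϑ]
  refine renyiDiv_nonneg (by linarith) (lamExpDensity_nonneg ϑ) (lamExpDensity_nonneg u)
    (fun h => ae_lamExpDensity_pos (by linarith) hF
      (ne_of_eq_of_ne (hZ u hu) ENNReal.ofReal_ne_top))
    ?_ (hnorm ϑ hϑ) (hnorm u hu)
  simpa only [sub_sub_cancel] using (integral_lamExpDensity_rpow_mul_rpow hlam0 hlam1' hF
    (hZ ϑ hϑ) (hInt ϑ hϑ) (hDUI ϑ hϑ) (hsupp' ϑ hϑ u hu)).1

/-- For a λ-exponential family (`λ < 1`, `λ ≠ 0`, `q = 1 − λ`) under the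
stated regularity conditions (nonempty open convex `Ω`, smooth divisive potential `φ_λ` with
differentiation under the integral sign, `1 − λ∇φ_λ·ϑ > 0`, strictly positive definite Hessian
of `(1/λ)(e^{λφ_λ} − 1)`, support condition): (a) the λ-logarithmic divergence of `φ_λ` is the
Rényi divergence of order `q` with swapped arguments, and (b) the `c_λ`-conjugate at
`η = ∇^{c_λ}φ_λ(ϑ)` equals the negative Rényi entropy of order `q` of `p(·;ϑ)`. -/
theorem lambdaExp_Renyi_duality {d : ℕ} {X : Type*} [MeasurableSpace X] (ν : Measure X)
    (lam q : ℝ) (hlam0 : lam ≠ 0) (hlam1 : lam < 1) (hq : q = 1 - lam)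
    (F : X → EuclideanSpace ℝ (Fin d)) (hF : Measurable F)
    (Ω : Set (EuclideanSpace ℝ (Fin d)))
    (hne : Ω.Nonempty) (hop : IsOpen Ω) (hconv : Convex ℝ Ω)
    (φ : EuclideanSpace ℝ (Fin d) → ℝ)
    (p : EuclideanSpace ℝ (Fin d) → X → ℝ)
    (hp : ∀ ϑ x, p ϑ x = (max (1 + lam * ⟪ϑ, F x⟫) 0) ^ (1 / lam) * Real.exp (-φ ϑ))
    (hnorm : ∀ ϑ ∈ Ω, ∫ x, p ϑ x ∂ν = 1)
    (hZ : ∀ ϑ ∈ Ω,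
      ∫⁻ x, (if 0 < 1 + lam * ⟪ϑ, F x⟫ then
          ENNReal.ofReal ((1 + lam * ⟪ϑ, F x⟫) ^ (1 / lam))
        else if 0 < lam then 0 else ⊤) ∂ν = ENNReal.ofReal (Real.exp (φ ϑ)))
    (hsmooth : ContDiffOn ℝ (⊤ : ℕ∞) φ Ω)
    (hdiff : ∀ ϑ ∈ Ω, DifferentiableAt ℝ φ ϑ)
    (hInt : ∀ ϑ ∈ Ω,
      Integrable (fun x => ((max (1 + lam * ⟪ϑ, F x⟫) 0) ^ (1 / lam - 1)) • F x) ν)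
    (hDUI : ∀ ϑ ∈ Ω, Real.exp (φ ϑ) • gradient φ ϑ
      = ∫ x, ((max (1 + lam * ⟪ϑ, F x⟫) 0) ^ (1 / lam - 1)) • F x ∂ν)
    (hpos : ∀ ϑ ∈ Ω, 0 < 1 - lam * ⟪gradient φ ϑ, ϑ⟫)
    (hhess : ∀ ϑ ∈ Ω, ∀ w : EuclideanSpace ℝ (Fin d), w ≠ 0 →
      0 < ⟪fderiv ℝ (gradient fun z => (1 / lam) * (Real.exp (lam * φ z) - 1)) ϑ w, w⟫)
    (X₀ : Set X) (hsupp : ∀ ϑ ∈ Ω, {x | 0 < p ϑ x} =ᵐ[ν] X₀) :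
    (∀ ϑ ∈ Ω, ∀ ϑ' ∈ Ω,
      φ ϑ - φ ϑ' - (1 / lam) * Real.log (1 + lam * ⟪gradient φ ϑ', ϑ - ϑ'⟫)
        = (1 / (q - 1)) * Real.log (∫ x, p ϑ' x ^ q * p ϑ x ^ (1 - q) ∂ν)) ∧
    (∀ ϑ ∈ Ω, lamConj lam Ω φ (lamGrad lam φ ϑ)
        = (((-(1 / (1 - q)) * Real.log (∫ x, p ϑ x ^ q ∂ν)) : ℝ) : EReal)) :=
  lambdaExp_Renyi_duality_general ν lam q hlam0 hlam1 hq F hF Ω φ p hp hnorm hZ hInt hDUI hpos X₀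
    hsupp
end
end
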